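/- arXiv:2302.11121 — 6 statements merged into one kernel-verified Lean document; each statement's English description precedes it below -/
import Mathlib

section
/- Under consistency, ignorability, positivity and the treatment-conditional measurement error model, for every t ∈ {0,1}, every loss ℓ : [0,1] × {0,1} → ℝ and every predictor f : 𝒳 → [0,1], the re-weighted surrogate risk over observed proxies equals the risk over target potential outcomes: E[w(X)·ℓ̃(f(X), Y) | T = t] = E[ℓ(f(X), Y*_t)]. -/
open scoped Classical
open Finset

/-- Probability of an event under a probability mass function `P` on a finite sample space. -/
noncomputable def pr {Ω : Type*} [Fintype Ω] (P : Ω → ℝ) (A : Set Ω) : ℝ :=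
  ∑ ω : Ω, if ω ∈ A then P ω else 0

/-- Conditional probability `P(A | B) = P(A ∩ B) / P(B)`. -/
noncomputable def cpr {Ω : Type*} [Fintype Ω] (P : Ω → ℝ) (A B : Set Ω) : ℝ :=
  pr P (A ∩ B) / pr P B

/-- Expectation of a real random variable. -/
noncomputable def ex {Ω : Type*} [Fintype Ω] (P : Ω → ℝ) (Z : Ω → ℝ) : ℝ :=
  ∑ ω : Ω, P ω * Z ω

/-- Conditional expectation `E[Z | B]`. -/
noncomputable def cex {Ω : Type*} [Fintype Ω] (P : Ω → ℝ) (Z : Ω → ℝ) (B : Set Ω) : ℝ :=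
  (∑ ω : Ω, if ω ∈ B then P ω * Z ω else 0) / pr P B

/-- The surrogate loss `ℓ̃` built from loss `ℓ` and error parameters `α` (FPR) and `β` (FNR). -/
noncomputable def surrogateLoss (α β : ℝ) (ℓ : Set.Icc (0:ℝ) 1 → Fin 2 → ℝ)
    (z : Set.Icc (0:ℝ) 1) (y : Fin 2) : ℝ :=
  if y = 1 then ((1 - α) * ℓ z 1 - β * ℓ z 0) / (1 - β - α)
  else ((1 - β) * ℓ z 0 - α * ℓ z 1) / (1 - β - α)

/-!
On `{T = t}` consistency replaces the observed proxy `Y` by the potential proxy `Y_t`. Stratify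
by `X = x`: there ignorability makes `Y_t` independent of `T`, so weighting the subpopulation
`T = t` by `P(T = t) / P(T = t | X = x)` (finite by positivity) reproduces the joint law of
`(X, Y_t)` in the whole population. It remains to see `E[ℓ̃(f(X), Y_t)] = E[ℓ(f(X), Y*_t)]`:
given `Y*_t = s` and `X = x` the proxy has the law `errorKernel α β s`, and `ℓ̃` is `ℓ` composed
with the inverse of that 2×2 stochastic matrix, so averaging `ℓ̃(z, ·)` against it returns `ℓ(z, s)`.
-/

section Probability

variable {Ω : Type*} [Fintype Ω] (P : Ω → ℝ)

lemma pr_mono (hP0 : ∀ ω, 0 ≤ P ω) {A B : Set Ω} (h : A ⊆ B) : pr P A ≤ pr P B :=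
  Finset.sum_le_sum fun ω _ => by
    by_cases hA : ω ∈ A
    · simp [hA, h hA]
    · by_cases hB : ω ∈ B <;> simp [hA, hB, hP0 ω]

lemma pr_nonneg (hP0 : ∀ ω, 0 ≤ P ω) (A : Set Ω) : 0 ≤ pr P A := by
  simpa [pr] using pr_mono P hP0 (Set.empty_subset A)

lemma pr_eq_zero_of_subset (hP0 : ∀ ω, 0 ≤ P ω) {A B : Set Ω} (h : A ⊆ B) (hB : pr P B = 0) :
    pr P A = 0 :=
  le_antisymm (hB ▸ pr_mono P hP0 h) (pr_nonneg P hP0 A)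

lemma pr_inter_eq_mul_of_cpr (hP0 : ∀ ω, 0 ≤ P ω) {A B : Set Ω} {r : ℝ}
    (h : 0 < pr P B → cpr P A B = r) : pr P (A ∩ B) = r * pr P B := by
  rcases (pr_nonneg P hP0 B).lt_or_eq with hB | hB
  · rw [← h hB, cpr, div_mul_cancel₀ _ hB.ne']
  · rw [← hB, mul_zero, pr_eq_zero_of_subset P hP0 Set.inter_subset_right hB.symm]

lemma cex_congr {Z Z' : Ω → ℝ} {B : Set Ω} (h : ∀ ω ∈ B, Z ω = Z' ω) :
    cex P Z B = cex P Z' B := by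
  unfold cex
  congr 1
  exact Finset.sum_congr rfl fun ω _ => by split_ifs with hω <;> simp [h ω, hω]

variable {κ : Type*} [Fintype κ]

lemma sum_ite_mem_mul_comp (A : Set Ω) (K : Ω → κ) (g : κ → ℝ) :
    (∑ ω, if ω ∈ A then P ω * g (K ω) else 0) = ∑ k, g k * pr P ({ω | K ω = k} ∩ A) := by
  simp only [pr, Finset.mul_sum]
  rw [Finset.sum_comm]
  refine Finset.sum_congr rfl fun ω _ => ?_
  by_cases hA : ω ∈ A <;> simp [hA, mul_comm]

lemma ex_comp (K : Ω → κ) (g : κ → ℝ) :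
    ex P (fun ω => g (K ω)) = ∑ k, g k * pr P {ω | K ω = k} := by
  simpa [ex] using sum_ite_mem_mul_comp P Set.univ K g

lemma pr_eq_sum_pr_fiber_inter (K : Ω → κ) (A : Set Ω) :
    pr P A = ∑ k, pr P ({ω | K ω = k} ∩ A) := by
  simpa [pr] using sum_ite_mem_mul_comp P A K 1

lemma sum_cpr_fiber_eq_one (K : Ω → κ) {C : Set Ω} (hC : pr P C ≠ 0) :
    ∑ k, cpr P {ω | K ω = k} C = 1 := by
  simp only [cpr, ← Finset.sum_div, ← pr_eq_sum_pr_fiber_inter P K C, div_self hC]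

lemma pr_comp_fiber_inter {γ : Type*} (K : Ω → κ) (g : κ → γ) (c : γ) (S : Set Ω) :
    pr P ({ω | g (K ω) = c} ∩ S) = ∑ k with g k = c, pr P ({ω | K ω = k} ∩ S) := by
  rw [pr_eq_sum_pr_fiber_inter P K, Finset.sum_filter]
  refine Finset.sum_congr rfl fun k _ => ?_
  by_cases hk : g k = c
  · rw [if_pos hk]
    congr 1
    ext ω
    simp +contextual [hk]
  · rw [if_neg hk]
    convert (show pr P ∅ = 0 by simp [pr])
    ext ω
    simp +contextual [hk]

lemma cpr_comp_inter_eq_mul {γ : Type*} (K : Ω → κ) (B C : Set Ω)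
    (hK : ∀ k, cpr P ({ω | K ω = k} ∩ B) C = cpr P {ω | K ω = k} C * cpr P B C)
    (g : κ → γ) (c : γ) :
    cpr P ({ω | g (K ω) = c} ∩ B) C = cpr P {ω | g (K ω) = c} C * cpr P B C := by
  have hsum : ∀ S, cpr P ({ω | g (K ω) = c} ∩ S) C
      = ∑ k with g k = c, cpr P ({ω | K ω = k} ∩ S) C := fun S => by
    simp only [cpr, Set.inter_assoc, pr_comp_fiber_inter P K g c, Finset.sum_div]
  calc cpr P ({ω | g (K ω) = c} ∩ B) C
      = ∑ k with g k = c, cpr P {ω | K ω = k} C * cpr P B C := by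
        rw [hsum]; exact Finset.sum_congr rfl fun k _ => hK k
    _ = cpr P {ω | g (K ω) = c} C * cpr P B C := by
        rw [← Finset.sum_mul, ← Set.inter_univ {ω | g (K ω) = c}, hsum]
        simp only [Set.inter_univ]

lemma weight_mul_pr_inter_inter (hP0 : ∀ ω, 0 ≤ P ω) {A B C : Set Ω} {w : ℝ}
    (hind : 0 < pr P C → cpr P (A ∩ B) C = cpr P A C * cpr P B C)
    (hpos : 0 < pr P C → 0 < cpr P B C) (hw : 0 < pr P C → w = pr P B / cpr P B C) :
    w * pr P (A ∩ B ∩ C) = pr P B * pr P (A ∩ C) := by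
  rcases (pr_nonneg P hP0 C).lt_or_eq with hC | hC
  · have hBC : pr P (B ∩ C) ≠ 0 := (div_ne_zero_iff.mp (hpos hC).ne').1
    have hABC := hind hC
    rw [hw hC]
    unfold cpr at hABC ⊢
    field_simp at hABC ⊢
    linear_combination pr P B * hABC
  · rw [pr_eq_zero_of_subset P hP0 Set.inter_subset_right hC.symm,
      pr_eq_zero_of_subset P hP0 Set.inter_subset_right hC.symm, mul_zero, mul_zero]

end Probability

section Reweighting

variable {Ω 𝒳 ν : Type*} [Fintype Ω] [Fintype 𝒳] [Fintype ν] (P : Ω → ℝ)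

lemma exists_pr_fiber_pos (hP1 : ∑ ω, P ω = 1) (X : Ω → 𝒳) : ∃ x, 0 < pr P {ω | X ω = x} := by
  have htotal : ∑ x, pr P {ω | X ω = x} = 1 := by
    simpa [pr, hP1] using (pr_eq_sum_pr_fiber_inter P X Set.univ).symm
  by_contra! hnone
  linarith [Finset.sum_nonpos fun x (_ : x ∈ Finset.univ) => hnone x]

theorem cex_weight_mul_eq_ex (hP0 : ∀ ω, 0 ≤ P ω) (hP1 : ∑ ω, P ω = 1)
    (X : Ω → 𝒳) (V : Ω → ν) (B : Set Ω)
    (hind : ∀ x, 0 < pr P {ω | X ω = x} → ∀ v,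
      cpr P ({ω | V ω = v} ∩ B) {ω | X ω = x}
        = cpr P {ω | V ω = v} {ω | X ω = x} * cpr P B {ω | X ω = x})
    (hpos : ∀ x, 0 < pr P {ω | X ω = x} → 0 < cpr P B {ω | X ω = x})
    (w : 𝒳 → ℝ) (hw : ∀ x, 0 < pr P {ω | X ω = x} → w x = pr P B / cpr P B {ω | X ω = x})
    (h : 𝒳 → ν → ℝ) :
    cex P (fun ω => w (X ω) * h (X ω) (V ω)) B = ex P (fun ω => h (X ω) (V ω)) := by
  have hB : pr P B ≠ 0 := by
    obtain ⟨x, hx⟩ := exists_pr_fiber_pos P hP1 X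
    have hBx : 0 < pr P (B ∩ {ω | X ω = x}) := (div_pos_iff_of_pos_right hx).mp (hpos x hx)
    exact (hBx.trans_le (pr_mono P hP0 Set.inter_subset_left)).ne'
  have hstratum : ∀ k : 𝒳 × ν,
      w k.1 * pr P ({ω | (X ω, V ω) = k} ∩ B) = pr P B * pr P {ω | (X ω, V ω) = k} := by
    rintro ⟨x, v⟩
    have hfiber : {ω | (X ω, V ω) = (x, v)} = {ω | V ω = v} ∩ {ω | X ω = x} := by
      ext ω
      simp [and_comm]
    rw [hfiber, Set.inter_right_comm]
    exact weight_mul_pr_inter_inter P hP0 (hind x · v) (hpos x) (hw x)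
  have hnum := sum_ite_mem_mul_comp P B (fun ω => (X ω, V ω)) (fun k => w k.1 * h k.1 k.2)
  simp only at hnum
  rw [cex, hnum, ex_comp P (fun ω => (X ω, V ω)) (fun k => h k.1 k.2), div_eq_iff hB,
    Finset.sum_mul]
  refine Finset.sum_congr rfl fun k _ => ?_
  rw [mul_comm (w _), mul_assoc, hstratum k]
  ring

end Reweighting

section MeasurementError

/-- `errorKernel α β s v` is the probability `P(Y = v | Y* = s)` of observing the proxy `v`
when the target outcome is `s`. -/
def errorKernel (α β : ℝ) : Fin 2 → Fin 2 → ℝ := ![![1 - α, α], ![β, 1 - β]]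

lemma sum_errorKernel_mul_surrogateLoss {α β : ℝ} (hαβ : α + β ≠ 1)
    (ℓ : Set.Icc (0:ℝ) 1 → Fin 2 → ℝ) (z : Set.Icc (0:ℝ) 1) (s : Fin 2) :
    ∑ v, errorKernel α β s v * surrogateLoss α β ℓ z v = ℓ z s := by
  have hden : 1 - β - α ≠ 0 := fun h => hαβ (by linarith)
  fin_cases s <;> simp [Fin.sum_univ_two, errorKernel, surrogateLoss] <;> field_simp <;> ring

variable {Ω 𝒳 : Type*} [Fintype Ω] (P : Ω → ℝ)

lemma pr_eq_errorKernel_mul (hP0 : ∀ ω, 0 ≤ P ω) (X : Ω → 𝒳) (Ys Yp : Ω → Fin 2) (α β : ℝ)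
    (hme : ∀ x, 0 < pr P {ω | X ω = x} →
      (0 < pr P {ω | Ys ω = 0 ∧ X ω = x} → cpr P {ω | Yp ω = 1} {ω | Ys ω = 0 ∧ X ω = x} = α) ∧
      (0 < pr P {ω | Ys ω = 1 ∧ X ω = x} → cpr P {ω | Yp ω = 0} {ω | Ys ω = 1 ∧ X ω = x} = β))
    (x : 𝒳) (s v : Fin 2) :
    pr P {ω | (X ω, Ys ω, Yp ω) = (x, s, v)}
      = errorKernel α β s v * pr P {ω | (X ω, Ys ω) = (x, s)} := by
  have hfiber : {ω | (X ω, Ys ω, Yp ω) = (x, s, v)}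
      = {ω | Yp ω = v} ∩ {ω | Ys ω = s ∧ X ω = x} := by
    ext ω
    simp only [Set.mem_ofPred_eq, Set.mem_inter_iff, Prod.mk.injEq]
    tauto
  have hbase : {ω | (X ω, Ys ω) = (x, s)} = {ω | Ys ω = s ∧ X ω = x} := by
    ext ω
    simp [and_comm]
  have htotal : ∀ s, pr P ({ω | Yp ω = 0} ∩ {ω | Ys ω = s ∧ X ω = x})
      + pr P ({ω | Yp ω = 1} ∩ {ω | Ys ω = s ∧ X ω = x}) = pr P {ω | Ys ω = s ∧ X ω = x} :=
    fun s => by simpa [Fin.sum_univ_two] using (pr_eq_sum_pr_fiber_inter P Yp _).symm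
  have hXpos : ∀ s, 0 < pr P {ω | Ys ω = s ∧ X ω = x} → 0 < pr P {ω | X ω = x} :=
    fun s h => h.trans_le (pr_mono P hP0 fun ω hω => hω.2)
  have hα : pr P ({ω | Yp ω = 1} ∩ {ω | Ys ω = 0 ∧ X ω = x})
      = α * pr P {ω | Ys ω = 0 ∧ X ω = x} :=
    pr_inter_eq_mul_of_cpr P hP0 fun h => (hme x (hXpos 0 h)).1 h
  have hβ : pr P ({ω | Yp ω = 0} ∩ {ω | Ys ω = 1 ∧ X ω = x})
      = β * pr P {ω | Ys ω = 1 ∧ X ω = x} :=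
    pr_inter_eq_mul_of_cpr P hP0 fun h => (hme x (hXpos 1 h)).2 h
  rw [hfiber, hbase]
  fin_cases s <;> fin_cases v <;> simp [errorKernel] <;> linarith [htotal 0, htotal 1]

theorem ex_surrogateLoss_eq [Fintype 𝒳] (hP0 : ∀ ω, 0 ≤ P ω) (X : Ω → 𝒳) (Ys Yp : Ω → Fin 2)
    {α β : ℝ} (hαβ : α + β ≠ 1)
    (hme : ∀ x, 0 < pr P {ω | X ω = x} →
      (0 < pr P {ω | Ys ω = 0 ∧ X ω = x} → cpr P {ω | Yp ω = 1} {ω | Ys ω = 0 ∧ X ω = x} = α) ∧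
      (0 < pr P {ω | Ys ω = 1 ∧ X ω = x} → cpr P {ω | Yp ω = 0} {ω | Ys ω = 1 ∧ X ω = x} = β))
    (ℓ : Set.Icc (0:ℝ) 1 → Fin 2 → ℝ) (f : 𝒳 → Set.Icc (0:ℝ) 1) :
    ex P (fun ω => surrogateLoss α β ℓ (f (X ω)) (Yp ω)) = ex P (fun ω => ℓ (f (X ω)) (Ys ω)) := by
  calc ex P (fun ω => surrogateLoss α β ℓ (f (X ω)) (Yp ω))
      = ∑ x, ∑ s, ∑ v, surrogateLoss α β ℓ (f x) v
          * (errorKernel α β s v * pr P {ω | (X ω, Ys ω) = (x, s)}) := by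
        simp only [Fintype.sum_prod_type,
          ex_comp P (fun ω => (X ω, Ys ω, Yp ω)) (fun k => surrogateLoss α β ℓ (f k.1) k.2.2), pr_eq_errorKernel_mul P hP0 X Ys Yp α β hme]
    _ = ∑ x, ∑ s, ℓ (f x) s * pr P {ω | (X ω, Ys ω) = (x, s)} := by
        refine Finset.sum_congr rfl fun x _ => Finset.sum_congr rfl fun s _ => ?_
        rw [← sum_errorKernel_mul_surrogateLoss hαβ ℓ (f x) s, Finset.sum_mul]
        exact Finset.sum_congr rfl fun v _ => by ring
    _ = ex P (fun ω => ℓ (f (X ω)) (Ys ω)) := by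
        rw [ex_comp P (fun ω => (X ω, Ys ω)) (fun k => ℓ (f k.1) k.2), Fintype.sum_prod_type]

end MeasurementError

theorem reweighted_surrogate_risk_unbiased_general
    {Ω 𝒳 : Type*} [Fintype Ω] [Fintype 𝒳]
    (P : Ω → ℝ) (hP0 : ∀ ω, 0 ≤ P ω) (hP1 : ∑ ω : Ω, P ω = 1)
    (X : Ω → 𝒳) (T : Ω → Fin 2)
    -- target potential outcomes `Ys t` and proxy potential outcomes `Yp t`, `t ∈ {0,1}`
    (Ys Yp : Fin 2 → Ω → Fin 2)
    -- consistency: the observed proxy outcome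
    (Y : Ω → Fin 2) (hcons : ∀ ω, Y ω = Yp (T ω) ω)
    -- ignorability: `(Y*₀, Y*₁, Y₀, Y₁) ⟂ T | X = x`
    (hig : ∀ x : 𝒳, 0 < pr P {ω | X ω = x} →
      ∀ a b c d t : Fin 2,
        cpr P ({ω | Ys 0 ω = a ∧ Ys 1 ω = b ∧ Yp 0 ω = c ∧ Yp 1 ω = d} ∩ {ω | T ω = t})
            {ω | X ω = x}
          = cpr P {ω | Ys 0 ω = a ∧ Ys 1 ω = b ∧ Yp 0 ω = c ∧ Yp 1 ω = d} {ω | X ω = x}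
            * cpr P {ω | T ω = t} {ω | X ω = x})
    -- positivity
    (hpos : ∀ x : 𝒳, 0 < pr P {ω | X ω = x} →
      0 < cpr P {ω | T ω = 1} {ω | X ω = x} ∧ cpr P {ω | T ω = 1} {ω | X ω = x} < 1)
    -- treatment-conditional measurement error model
    (α β : Fin 2 → ℝ)
    (hαβ : ∀ t, α t + β t < 1)
    (hme : ∀ (t : Fin 2) (x : 𝒳), 0 < pr P {ω | X ω = x} →
      (0 < pr P {ω | Ys t ω = 0 ∧ X ω = x} →
        cpr P {ω | Yp t ω = 1} {ω | Ys t ω = 0 ∧ X ω = x} = α t) ∧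
      (0 < pr P {ω | Ys t ω = 1 ∧ X ω = x} →
        cpr P {ω | Yp t ω = 0} {ω | Ys t ω = 1 ∧ X ω = x} = β t))
    -- target intervention, loss, predictor
    (t : Fin 2) (ℓ : Set.Icc (0:ℝ) 1 → Fin 2 → ℝ) (f : 𝒳 → Set.Icc (0:ℝ) 1)
    -- weighting function `w(x) = P(T = t) / P(T = t | X = x)`
    (w : 𝒳 → ℝ)
    (hw : ∀ x : 𝒳, 0 < pr P {ω | X ω = x} →
      w x = pr P {ω | T ω = t} / cpr P {ω | T ω = t} {ω | X ω = x}) :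
    cex P (fun ω => w (X ω) * surrogateLoss (α t) (β t) ℓ (f (X ω)) (Y ω)) {ω | T ω = t}
      = ex P (fun ω => ℓ (f (X ω)) (Ys t ω)) := by
  have hposT : ∀ x, 0 < pr P {ω | X ω = x} → 0 < cpr P {ω | T ω = t} {ω | X ω = x} := by
    intro x hx
    have hsum := sum_cpr_fiber_eq_one P T hx.ne'
    rw [Fin.sum_univ_two] at hsum
    obtain ⟨h1, h1'⟩ := hpos x hx
    fin_cases t
    · simp only [Fin.zero_eta]
      linarith
    · exact h1
  have hind : ∀ x, 0 < pr P {ω | X ω = x} → ∀ v,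
      cpr P ({ω | Yp t ω = v} ∩ {ω | T ω = t}) {ω | X ω = x}
        = cpr P {ω | Yp t ω = v} {ω | X ω = x} * cpr P {ω | T ω = t} {ω | X ω = x} := by
    intro x hx
    refine cpr_comp_inter_eq_mul P (fun ω => (fun i => Ys i ω, fun i => Yp i ω)) _ _
      (fun k => ?_) (fun k => k.2 t)
    have hfiber : {ω | (fun i => Ys i ω, fun i => Yp i ω) = k}
        = {ω | Ys 0 ω = k.1 0 ∧ Ys 1 ω = k.1 1 ∧ Yp 0 ω = k.2 0 ∧ Yp 1 ω = k.2 1} := by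
      ext ω
      simp [Prod.ext_iff, funext_iff, Fin.forall_fin_two, and_assoc]
    rw [hfiber]
    exact hig x hx _ _ _ _ t
  calc cex P (fun ω => w (X ω) * surrogateLoss (α t) (β t) ℓ (f (X ω)) (Y ω)) {ω | T ω = t}
      = cex P (fun ω => w (X ω) * surrogateLoss (α t) (β t) ℓ (f (X ω)) (Yp t ω))
          {ω | T ω = t} :=
        cex_congr P fun ω (hω : T ω = t) => by rw [hcons, hω]
    _ = ex P (fun ω => surrogateLoss (α t) (β t) ℓ (f (X ω)) (Yp t ω)) :=
        cex_weight_mul_eq_ex P hP0 hP1 X (Yp t) _ hind hposT w hw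
          fun x v => surrogateLoss (α t) (β t) ℓ (f x) v
    _ = ex P (fun ω => ℓ (f (X ω)) (Ys t ω)) :=
        ex_surrogateLoss_eq P hP0 X (Ys t) (Yp t) (hαβ t).ne (hme t) ℓ f

/-- Under consistency, ignorability, positivity and the treatment-conditional
measurement error model, the re-weighted surrogate risk over observed proxies equals the risk
over target potential outcomes: `E[w(X)·ℓ̃(f(X), Y) | T = t] = E[ℓ(f(X), Y*_t)]`. -/
theorem reweighted_surrogate_risk_unbiased
    {Ω 𝒳 : Type*} [Fintype Ω] [Fintype 𝒳] [Nonempty 𝒳]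
    (P : Ω → ℝ) (hP0 : ∀ ω, 0 ≤ P ω) (hP1 : ∑ ω : Ω, P ω = 1)
    (X : Ω → 𝒳) (T : Ω → Fin 2)
    -- target potential outcomes `Ys t` and proxy potential outcomes `Yp t`, `t ∈ {0,1}`
    (Ys Yp : Fin 2 → Ω → Fin 2)
    -- consistency: the observed proxy outcome
    (Y : Ω → Fin 2) (hcons : ∀ ω, Y ω = Yp (T ω) ω)
    -- ignorability: `(Y*₀, Y*₁, Y₀, Y₁) ⟂ T | X = x`
    (hig : ∀ x : 𝒳, 0 < pr P {ω | X ω = x} →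
      ∀ a b c d t : Fin 2,
        cpr P ({ω | Ys 0 ω = a ∧ Ys 1 ω = b ∧ Yp 0 ω = c ∧ Yp 1 ω = d} ∩ {ω | T ω = t})
            {ω | X ω = x}
          = cpr P {ω | Ys 0 ω = a ∧ Ys 1 ω = b ∧ Yp 0 ω = c ∧ Yp 1 ω = d} {ω | X ω = x}
            * cpr P {ω | T ω = t} {ω | X ω = x})
    -- positivity
    (hpos : ∀ x : 𝒳, 0 < pr P {ω | X ω = x} →
      0 < cpr P {ω | T ω = 1} {ω | X ω = x} ∧ cpr P {ω | T ω = 1} {ω | X ω = x} < 1)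
    -- treatment-conditional measurement error model
    (α β : Fin 2 → ℝ)
    (hα : ∀ t, α t ∈ Set.Ico (0:ℝ) 1) (hβ : ∀ t, β t ∈ Set.Ico (0:ℝ) 1)
    (hαβ : ∀ t, α t + β t < 1)
    (hme : ∀ (t : Fin 2) (x : 𝒳), 0 < pr P {ω | X ω = x} →
      (0 < pr P {ω | Ys t ω = 0 ∧ X ω = x} →
        cpr P {ω | Yp t ω = 1} {ω | Ys t ω = 0 ∧ X ω = x} = α t) ∧
      (0 < pr P {ω | Ys t ω = 1 ∧ X ω = x} →
        cpr P {ω | Yp t ω = 0} {ω | Ys t ω = 1 ∧ X ω = x} = β t))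
    -- target intervention, loss, predictor
    (t : Fin 2) (ℓ : Set.Icc (0:ℝ) 1 → Fin 2 → ℝ) (f : 𝒳 → Set.Icc (0:ℝ) 1)
    -- weighting function `w(x) = P(T = t) / P(T = t | X = x)`
    (w : 𝒳 → ℝ)
    (hw : ∀ x : 𝒳, 0 < pr P {ω | X ω = x} →
      w x = pr P {ω | T ω = t} / cpr P {ω | T ω = t} {ω | X ω = x}) :
    cex P (fun ω => w (X ω) * surrogateLoss (α t) (β t) ℓ (f (X ω)) (Y ω)) {ω | T ω = t}
      = ex P (fun ω => ℓ (f (X ω)) (Ys t ω)) :=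
  reweighted_surrogate_risk_unbiased_general P hP0 hP1 X T Ys Yp Y hcons hig hpos α β hαβ hme t ℓ f
    w hw
end

section
/- Let α, β ∈ [0,1) with α + β < 1, and let ℓ₀, ℓ₁ ∈ ℝ. Define ℓ̃₁ = ((1−α)·ℓ₁ − β·ℓ₀)/(1−β−α) and ℓ̃₀ = ((1−β)·ℓ₀ − α·ℓ₁)/(1−β−α). Then (1−β)·ℓ̃₁ + β·ℓ̃₀ = ℓ₁ and (1−α)·ℓ̃₀ + α·ℓ̃₁ = ℓ₀. That is, the expected surrogate loss under labels corrupted with false positive rate α and false negative rate β equals the clean loss, conditionally on each true label value. -/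
/-- The surrogate loss is unbiased conditionally on each true label value:
`(1−β)·ℓ̃₁ + β·ℓ̃₀ = ℓ₁` and `(1−α)·ℓ̃₀ + α·ℓ̃₁ = ℓ₀`, where
`ℓ̃₁ = ((1−α)·ℓ₁ − β·ℓ₀)/(1−β−α)` and `ℓ̃₀ = ((1−β)·ℓ₀ − α·ℓ₁)/(1−β−α)`. -/
theorem surrogate_loss_unbiased_given_true_label
    (α β : ℝ) (hα : α ∈ Set.Ico (0:ℝ) 1) (hβ : β ∈ Set.Ico (0:ℝ) 1) (hαβ : α + β < 1)
    (ℓ₀ ℓ₁ ℓt₀ ℓt₁ : ℝ)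
    (hℓt₁ : ℓt₁ = ((1 - α) * ℓ₁ - β * ℓ₀) / (1 - β - α))
    (hℓt₀ : ℓt₀ = ((1 - β) * ℓ₀ - α * ℓ₁) / (1 - β - α)) :
    (1 - β) * ℓt₁ + β * ℓt₀ = ℓ₁ ∧ (1 - α) * ℓt₀ + α * ℓt₁ = ℓ₀ := by
  have h : 1 - β - α ≠ 0 := by linarith
  subst hℓt₁ hℓt₀
  constructor <;> field_simp <;> ring
end

section
/- Let α, β, c*_i, c*_j, c_i, c_j be real numbers satisfying c_i = (1−β)·c*_i + α·(1−c*_i) and c_j = (1−β)·c*_j + α·(1−c*_j), with c*_i ≠ c*_j. Then the error parameters are uniquely determined: α = (c*_i·c_j − c_i·c*_j)/(c*_i − c*_j) and β = (c_i·c*_j − c_i + c*_i − c*_j + c_j − c*_i·c_j)/(c*_i − c*_j). -/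
/-- Two anchor points `(c*_i, c_i)`, `(c*_j, c_j)` with `c*_i ≠ c*_j`
uniquely determine the measurement error parameters `α` and `β`. -/
theorem error_params_identified_from_two_anchors
    (α β ci cj csi csj : ℝ)
    (hi : ci = (1 - β) * csi + α * (1 - csi))
    (hj : cj = (1 - β) * csj + α * (1 - csj))
    (hne : csi ≠ csj) :
    α = (csi * cj - ci * csj) / (csi - csj) ∧
    β = (ci * csj - ci + csi - csj + cj - csi * cj) / (csi - csj) := by
  have h : csi - csj ≠ 0 := sub_ne_zero.mpr hne
  constructor <;> field_simp <;> subst hi hj <;> ring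
end

section
/- Let 𝒳 be a nonempty type, η* : 𝒳 → [0,1], and α, β ∈ [0,1) with α + β < 1, and define η(x) = (1−β)·η*(x) + α·(1−η*(x)). If the min anchor assumption ⨅_{x} η*(x) = 0 and the max anchor assumption ⨆_{x} η*(x) = 1 both hold, then the error parameters are recovered from η alone: α = ⨅_{x} η(x) and β = 1 − ⨆_{x} η(x). -/
/-- Under the min anchor (`⨅ η* = 0`) and max anchor (`⨆ η* = 1`)
assumptions, the error parameters are recovered from the corrupted class probability alone:
`α = ⨅ η` and `β = 1 − ⨆ η`. -/
theorem error_params_recovered_from_min_max_anchors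
    {𝒳 : Type*} [Nonempty 𝒳]
    (ηs : 𝒳 → ℝ) (hηs : ∀ x, ηs x ∈ Set.Icc (0:ℝ) 1)
    (α β : ℝ) (hα : α ∈ Set.Ico (0:ℝ) 1) (hβ : β ∈ Set.Ico (0:ℝ) 1) (hαβ : α + β < 1)
    (η : 𝒳 → ℝ) (hη : ∀ x, η x = (1 - β) * ηs x + α * (1 - ηs x))
    (hmin : (⨅ x, ηs x) = 0) (hmax : (⨆ x, ηs x) = 1) :
    α = (⨅ x, η x) ∧ β = 1 - (⨆ x, η x) := by
  set k : ℝ := 1 - α - β with hk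
  have hkpos : 0 < k := by linarith
  set f : ℝ → ℝ := fun t => α + k * t with hf
  have hMf : Monotone f := fun a b hab => by
    simp only [hf]
    nlinarith
  have hCf : Continuous f := by continuity
  have hηf : η = fun x => f (ηs x) := by
    funext x
    rw [hη x]
    simp only [hf, hk]; ring
  have hbb : BddBelow (Set.range ηs) := ⟨0, by rintro _ ⟨x, rfl⟩; exact (hηs x).1⟩
  have hba : BddAbove (Set.range ηs) := ⟨1, by rintro _ ⟨x, rfl⟩; exact (hηs x).2⟩
  have h1 : f (⨅ x, ηs x) = ⨅ x, f (ηs x) :=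
    hMf.map_ciInf_of_continuousAt hCf.continuousAt hbb
  have h2 : f (⨆ x, ηs x) = ⨆ x, f (ηs x) :=
    hMf.map_ciSup_of_continuousAt hCf.continuousAt hba
  rw [hmin] at h1
  rw [hmax] at h2
  constructor
  · rw [hηf, ← h1]; simp [hf]
  · rw [hηf, ← h2]; simp only [hf, hk]; ring
end

section
/- Let 𝒳 be a nonempty finite type, μ a probability mass function on 𝒳, η* : 𝒳 → [0,1], and α, β ∈ [0,1) with α + β < 1, and define η(x) = (1−β)·η*(x) + α·(1−η*(x)). Suppose the min anchor assumption ⨅_{x} η*(x) = 0 holds and the true base rate b* := ∑_x μ(x)·η*(x) is known with b* ≠ 0. Then the error parameters are recovered from η and b*: α = ⨅_{x} η(x) and β = 1 − α − (∑_x μ(x)·η(x) − α)/b*. -/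
/-!
The corrupted probability `η = α + (1 - α - β) η*` is a nondecreasing affine function of `η*`,
so its infimum and its base rate are the same affine function of those of `η*`. The min anchor
`⨅ η* = 0` therefore gives `⨅ η = α`, and the known base rate `b* ≠ 0` lets one solve
`∑ μ η = α + (1 - α - β) b*` for `β`.
-/

open Finset

theorem ciInf_const_add_mul_of_nonneg {ι : Type*} [Finite ι] [Nonempty ι] (a : ℝ) {c : ℝ}
    (hc : 0 ≤ c) (f : ι → ℝ) : ⨅ i, (a + c * f i) = a + c * ⨅ i, f i := by
  rw [Real.mul_iInf_of_nonneg hc]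
  exact ((OrderIso.addLeft a).map_ciInf (Set.finite_range _).bddBelow).symm

theorem sum_mul_const_add_mul_of_sum_eq_one {ι : Type*} [Fintype ι] {μ : ι → ℝ}
    (hμ : ∑ i, μ i = 1) (a c : ℝ) (f : ι → ℝ) :
    ∑ i, μ i * (a + c * f i) = a + c * ∑ i, μ i * f i := by
  simp only [mul_add, sum_add_distrib, ← sum_mul, hμ, mul_left_comm _ c, ← mul_sum]
  ring

theorem error_params_recovered_from_min_and_base_rate_anchors_general
    {𝒳 : Type*} [Fintype 𝒳] [Nonempty 𝒳]
    (μ : 𝒳 → ℝ) (hμ1 : ∑ x : 𝒳, μ x = 1)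
    (ηs : 𝒳 → ℝ)
    (α β : ℝ) (hαβ : α + β < 1)
    (η : 𝒳 → ℝ) (hη : ∀ x, η x = (1 - β) * ηs x + α * (1 - ηs x))
    (hmin : (⨅ x, ηs x) = 0)
    (bs : ℝ) (hbs : bs = ∑ x : 𝒳, μ x * ηs x) (hbs0 : bs ≠ 0) :
    α = (⨅ x, η x) ∧ β = 1 - α - ((∑ x : 𝒳, μ x * η x) - α) / bs := by
  obtain rfl : η = fun x => α + (1 - α - β) * ηs x := funext fun x => (hη x).trans (by ring)
  constructor
  · rw [ciInf_const_add_mul_of_nonneg α (by linarith) ηs, hmin, mul_zero, add_zero]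
  · rw [sum_mul_const_add_mul_of_sum_eq_one hμ1, ← hbs]
    field_simp
    ring

/-- Under the min anchor assumption `⨅ η* = 0` and knowledge of the true base
rate `b* = ∑ₓ μ(x)·η*(x) ≠ 0`, the error parameters are recovered:
`α = ⨅ η` and `β = 1 − α − (∑ₓ μ(x)·η(x) − α)/b*`. -/
theorem error_params_recovered_from_min_and_base_rate_anchors
    {𝒳 : Type*} [Fintype 𝒳] [Nonempty 𝒳]
    (μ : 𝒳 → ℝ) (hμ0 : ∀ x, 0 ≤ μ x) (hμ1 : ∑ x : 𝒳, μ x = 1)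
    (ηs : 𝒳 → ℝ) (hηs : ∀ x, ηs x ∈ Set.Icc (0:ℝ) 1)
    (α β : ℝ) (hα : α ∈ Set.Ico (0:ℝ) 1) (hβ : β ∈ Set.Ico (0:ℝ) 1) (hαβ : α + β < 1)
    (η : 𝒳 → ℝ) (hη : ∀ x, η x = (1 - β) * ηs x + α * (1 - ηs x))
    (hmin : (⨅ x, ηs x) = 0)
    (bs : ℝ) (hbs : bs = ∑ x : 𝒳, μ x * ηs x) (hbs0 : bs ≠ 0) :
    α = (⨅ x, η x) ∧ β = 1 - α - ((∑ x : 𝒳, μ x * η x) - α) / bs :=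
  error_params_recovered_from_min_and_base_rate_anchors_general μ hμ1 ηs α β hαβ η hη hmin bs hbs
    hbs0
end

section
/- Let 𝒳 be a nonempty finite type, μ a probability mass function on 𝒳, η* : 𝒳 → [0,1], and α, β ∈ [0,1) with α + β < 1, and define η(x) = (1−β)·η*(x) + α·(1−η*(x)). Suppose the max anchor assumption ⨆_{x} η*(x) = 1 holds and the true base rate b* := ∑_x μ(x)·η*(x) is known with b* ≠ 1. Then the error parameters are recovered from η and b*: β = 1 − ⨆_{x} η(x) and α = (∑_x μ(x)·η(x) − (1−β)·b*)/(1−b*). -/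
/-- Under the max anchor assumption `⨆ η* = 1` and knowledge of the true base
rate `b* = ∑ₓ μ(x)·η*(x) ≠ 1`, the error parameters are recovered:
`β = 1 − ⨆ η` and `α = (∑ₓ μ(x)·η(x) − (1−β)·b*)/(1−b*)`. -/
theorem error_params_recovered_from_max_and_base_rate_anchors
    {𝒳 : Type*} [Fintype 𝒳] [Nonempty 𝒳]
    (μ : 𝒳 → ℝ) (hμ0 : ∀ x, 0 ≤ μ x) (hμ1 : ∑ x : 𝒳, μ x = 1)
    (ηs : 𝒳 → ℝ) (hηs : ∀ x, ηs x ∈ Set.Icc (0:ℝ) 1)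
    (α β : ℝ) (hα : α ∈ Set.Ico (0:ℝ) 1) (hβ : β ∈ Set.Ico (0:ℝ) 1) (hαβ : α + β < 1)
    (η : 𝒳 → ℝ) (hη : ∀ x, η x = (1 - β) * ηs x + α * (1 - ηs x))
    (hmax : (⨆ x, ηs x) = 1)
    (bs : ℝ) (hbs : bs = ∑ x : 𝒳, μ x * ηs x) (hbs1 : bs ≠ 1) :
    β = 1 - (⨆ x, η x) ∧ α = ((∑ x : 𝒳, μ x * η x) - (1 - β) * bs) / (1 - bs) := by
  -- there is a maximizer x₀ with ηs x₀ = 1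
  obtain ⟨x₀, hx₀⟩ := Finite.exists_max ηs
  have hsup : ηs x₀ = 1 := by
    rw [← hmax]
    exact le_antisymm (le_ciSup (Set.Finite.bddAbove (Set.finite_range ηs)) x₀)
      (ciSup_le hx₀)
  have hηsup : (⨆ x, η x) = 1 - β := by
    apply le_antisymm
    · apply ciSup_le
      intro x
      have h1 := (hηs x).1
      have h2 := (hηs x).2
      rw [hη x]
      nlinarith [hα.1, hβ.1]
    · have := le_ciSup (Set.Finite.bddAbove (Set.finite_range η)) x₀
      rw [hη x₀, hsup] at this
      simpa using this
  constructor
  · rw [hηsup]; ring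
  · have hsum : (∑ x : 𝒳, μ x * η x) = α + (1 - α - β) * bs := by
      have h : ∀ x : 𝒳, μ x * η x = (1 - α - β) * (μ x * ηs x) + α * μ x := by
        intro x; rw [hη x]; ring
      rw [Finset.sum_congr rfl fun x _ => h x, Finset.sum_add_distrib, ← Finset.mul_sum,
        ← Finset.mul_sum, hμ1, ← hbs]
      ring
    rw [hsum]
    field_simp [sub_ne_zero.mpr (Ne.symm hbs1)]
    ring
end
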